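/- Let X be a complex Banach space and Δ : S(c₀(Γ)) → S(X) a surjective isometry. Then for each n ∈ Γ and each μ ∈ 𝕋, Δ(-μe_n) = -Δ(μe_n). -/

import Mathlib

/-!
Let `Δ z = -Δ x` with `x = μ • eₙ` (surjectivity). Then `‖z - x‖ = 2`, and since `x` lives on the
single coordinate `n`, strict convexity of `ℂ` forces `z n = -μ`. For `j ≠ n` and unimodular `β`,
the same argument applied to `β • eⱼ` and the preimage `q` of `-Δ (β • eⱼ)` gives `q j = -β`, while
`‖z - q‖ = ‖x - β • eⱼ‖ = 1`; hence `‖z j + β‖ ≤ 1` for all unimodular `β`, so `z j = 0`. Thus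
`z = -μ • eₙ = y`.
-/

open ZeroAtInfty Metric

/-- The canonical basis vector `e n` of `c₀(Γ)`. -/
noncomputable def stdBasis {Γ : Type*} [TopologicalSpace Γ] [DiscreteTopology Γ] [DecidableEq Γ]
    (n : Γ) : C₀(Γ, ℂ) where
  toFun := fun k => if k = n then 1 else 0
  continuous_toFun := continuous_of_discreteTopology
  zero_at_infty' := by
    have h : (fun k => if k = n then (1 : ℂ) else 0) =ᶠ[Filter.cocompact Γ] 0 := by
      refine Filter.mem_cocompact.2 ⟨{n}, isCompact_singleton, ?_⟩
      intro k hk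
      simp only [Set.mem_compl_iff, Set.mem_singleton_iff] at hk
      simp [hk]
    exact Filter.Tendsto.congr' h.symm tendsto_const_nhds

namespace ZeroAtInftyContinuousMap

variable {Γ E : Type*} [TopologicalSpace Γ] [NormedAddCommGroup E]

theorem norm_apply_le (f : C₀(Γ, E)) (k : Γ) : ‖f k‖ ≤ ‖f‖ :=
  f.toBCF.norm_coe_le_norm k

theorem norm_le {f : C₀(Γ, E)} {C : ℝ} (hC : 0 ≤ C) : ‖f‖ ≤ C ↔ ∀ k, ‖f k‖ ≤ C :=
  BoundedContinuousFunction.norm_le hC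

theorem norm_sub_le_max_of_forall_ne_eq_zero {f g : C₀(Γ, E)} {j : Γ} (hg : ∀ i ≠ j, g i = 0) :
    ‖f - g‖ ≤ max ‖f j - g j‖ ‖f‖ := by
  refine (norm_le ((norm_nonneg f).trans (le_max_right _ _))).2 fun k ↦ ?_
  rcases eq_or_ne k j with rfl | hk
  · exact le_max_left _ _
  · simpa [hg k hk] using (norm_apply_le f k).trans (le_max_right _ _)

/-- The distance `2` is attained at `j`, where it is an equality case of the triangle inequality. -/
theorem apply_eq_neg_of_norm_sub_eq_two [NormedSpace ℝ E] [StrictConvexSpace ℝ E]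
    {f g : C₀(Γ, E)} {j : Γ} (hf : ‖f‖ ≤ 1) (hgj : ‖g j‖ = 1) (hg : ∀ i ≠ j, g i = 0)
    (hfg : ‖f - g‖ = 2) : f j = -g j := by
  have hfj : ‖f j‖ ≤ 1 := (norm_apply_le f j).trans hf
  have h2 : 2 ≤ ‖f j - g j‖ := by
    have := hfg ▸ norm_sub_le_max_of_forall_ne_eq_zero (f := f) hg
    rcases le_max_iff.1 this with h | h
    · exact h
    · linarith
  have hfj' : ‖f j‖ = 1 := by linarith [norm_sub_le (f j) (g j)]
  refine eq_of_norm_eq_of_norm_add_eq (by rw [norm_neg, hfj', hgj]) ?_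
  rw [← sub_eq_add_neg, norm_neg, hfj', hgj]
  linarith [norm_sub_le (f j) (g j)]

end ZeroAtInftyContinuousMap

open ZeroAtInftyContinuousMap (norm_apply_le norm_le apply_eq_neg_of_norm_sub_eq_two)

theorem eq_zero_of_forall_norm_add_le_one {E : Type*} [NormedAddCommGroup E] [NormedSpace ℝ E]
    {c : E} (h : ∀ β : E, ‖β‖ = 1 → ‖c + β‖ ≤ 1) : c = 0 := by
  by_contra hc
  have hpos : 0 < ‖c‖ := norm_pos_iff.2 hc
  have hβ : ‖‖c‖⁻¹ • c‖ = 1 := norm_smul_inv_norm hc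
  have hsum : c + ‖c‖⁻¹ • c = (‖c‖ + 1) • ‖c‖⁻¹ • c := by
    rw [smul_smul, add_mul, mul_inv_cancel₀ hpos.ne', one_mul, add_smul, one_smul]
  have := h _ hβ
  rw [hsum, norm_smul, hβ, Real.norm_of_nonneg (by positivity)] at this
  linarith

section StdBasis

variable {Γ : Type*} [TopologicalSpace Γ] [DiscreteTopology Γ] [DecidableEq Γ]

@[simp]
theorem stdBasis_apply (n k : Γ) : stdBasis n k = if k = n then 1 else 0 :=
  rfl

theorem smul_stdBasis_apply (μ : ℂ) (n k : Γ) :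
    (μ • stdBasis n) k = if k = n then μ else 0 := by
  simp

@[simp]
theorem norm_smul_stdBasis (μ : ℂ) (n : Γ) : ‖μ • stdBasis n‖ = ‖μ‖ := by
  refine le_antisymm ((norm_le (norm_nonneg μ)).2 fun k ↦ ?_) ?_
  · rw [smul_stdBasis_apply]
    split_ifs <;> simp
  · simpa using norm_apply_le (μ • stdBasis n) n

theorem norm_smul_stdBasis_sub_smul_stdBasis {n j : Γ} (hnj : n ≠ j) (μ β : ℂ) :
    ‖μ • stdBasis n - β • stdBasis j‖ = max ‖μ‖ ‖β‖ := by
  refine le_antisymm ((norm_le (by positivity)).2 fun k ↦ ?_) (max_le ?_ ?_)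
  · simp only [ZeroAtInftyContinuousMap.sub_apply, smul_stdBasis_apply]
    split_ifs with hkn hkj hkj
    · exact absurd (hkn.symm.trans hkj) hnj
    all_goals simp
  · simpa [hnj] using norm_apply_le (μ • stdBasis n - β • stdBasis j) n
  · simpa [hnj.symm] using norm_apply_le (μ • stdBasis n - β • stdBasis j) j

theorem norm_eq_one_of_coe_eq_smul_stdBasis {x : sphere (0 : C₀(Γ, ℂ)) 1} {μ : ℂ} {n : Γ}
    (hx : (x : C₀(Γ, ℂ)) = μ • stdBasis n) : ‖μ‖ = 1 := by
  rw [← norm_smul_stdBasis μ n, ← hx, norm_eq_of_mem_sphere]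

end StdBasis

theorem Isometry.norm_sub_eq {E F : Type*} [SeminormedAddCommGroup E] [SeminormedAddCommGroup F]
    {s : Set E} {t : Set F} {f : s → t} (hf : Isometry f) (u v : s) :
    ‖(f u : F) - f v‖ = ‖(u : E) - v‖ := by
  simpa only [Subtype.dist_eq, dist_eq_norm] using hf.dist_eq u v

theorem Isometry.norm_sub_eq_two_of_apply_eq_neg {E F : Type*} [SeminormedAddCommGroup E]
    [NormedAddCommGroup F] [NormedSpace ℝ F] {s : Set E} {f : s → sphere (0 : F) 1}
    (hf : Isometry f) {p q : s} (h : (f q : F) = -f p) : ‖(q : E) - p‖ = 2 := by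
  rw [← hf.norm_sub_eq, h, ← neg_add', norm_neg, ← two_smul ℝ, norm_smul,
    norm_eq_of_mem_sphere]
  norm_num

theorem exists_apply_eq_neg_of_surjective {α F : Type*} [NormedAddCommGroup F]
    {f : α → sphere (0 : F) 1} (hf : Function.Surjective f) (a : α) :
    ∃ b, (f b : F) = -f a := by
  obtain ⟨b, hb⟩ := hf ⟨-f a, by simp⟩
  exact ⟨b, congrArg Subtype.val hb⟩

section SphereIsometry

variable {Γ : Type*} [TopologicalSpace Γ] [DiscreteTopology Γ] [DecidableEq Γ]
  {X : Type*} [NormedAddCommGroup X] [NormedSpace ℝ X]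
  {Δ : sphere (0 : C₀(Γ, ℂ)) 1 → sphere (0 : X) 1}

theorem apply_eq_neg_of_map_eq_neg (hΔ : Isometry Δ) {p q : sphere (0 : C₀(Γ, ℂ)) 1}
    {β : ℂ} {j : Γ} (hp : (p : C₀(Γ, ℂ)) = β • stdBasis j) (hq : (Δ q : X) = -Δ p) :
    (q : C₀(Γ, ℂ)) j = -β := by
  have hβ := norm_eq_one_of_coe_eq_smul_stdBasis hp
  have := apply_eq_neg_of_norm_sub_eq_two (j := j) (norm_eq_of_mem_sphere q).le
    (by simp [hp, hβ]) (fun i hi ↦ by simp [hp, hi]) (hΔ.norm_sub_eq_two_of_apply_eq_neg hq)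
  simpa [hp] using this

/-- Distances to the antipodes `-Δ (β • e j)` show that `‖z j + β‖ ≤ 1` for every unimodular `β`. -/
theorem apply_eq_zero_of_map_eq_neg (hΔ : Isometry Δ) (hsurj : Function.Surjective Δ)
    {x z : sphere (0 : C₀(Γ, ℂ)) 1} {μ : ℂ} {n j : Γ} (hjn : j ≠ n)
    (hx : (x : C₀(Γ, ℂ)) = μ • stdBasis n) (hz : (Δ z : X) = -Δ x) :
    (z : C₀(Γ, ℂ)) j = 0 := by
  refine eq_zero_of_forall_norm_add_le_one fun β hβ ↦ ?_
  let p : sphere (0 : C₀(Γ, ℂ)) 1 := ⟨β • stdBasis j, by simp [hβ]⟩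
  obtain ⟨q, hq⟩ := exists_apply_eq_neg_of_surjective hsurj p
  have hzq : ‖(z : C₀(Γ, ℂ)) - q‖ = 1 := by
    rw [← hΔ.norm_sub_eq, hz, hq, neg_sub_neg, hΔ.norm_sub_eq, hx,
      norm_smul_stdBasis_sub_smul_stdBasis hjn, hβ, norm_eq_one_of_coe_eq_smul_stdBasis hx,
      max_self]
  calc ‖(z : C₀(Γ, ℂ)) j + β‖ = ‖((z : C₀(Γ, ℂ)) - q) j‖ := by
        rw [ZeroAtInftyContinuousMap.sub_apply, apply_eq_neg_of_map_eq_neg hΔ rfl hq,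
          sub_neg_eq_add]
    _ ≤ ‖(z : C₀(Γ, ℂ)) - q‖ := norm_apply_le _ j
    _ = 1 := hzq

theorem eq_neg_smul_stdBasis_of_map_eq_neg (hΔ : Isometry Δ) (hsurj : Function.Surjective Δ)
    {x z : sphere (0 : C₀(Γ, ℂ)) 1} {μ : ℂ} {n : Γ}
    (hx : (x : C₀(Γ, ℂ)) = μ • stdBasis n) (hz : (Δ z : X) = -Δ x) :
    (z : C₀(Γ, ℂ)) = -(μ • stdBasis n) := by
  ext k
  rw [ZeroAtInftyContinuousMap.neg_apply, smul_stdBasis_apply]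
  split_ifs with hkn
  · subst hkn
    exact apply_eq_neg_of_map_eq_neg hΔ hx hz
  · rw [neg_zero]
    exact apply_eq_zero_of_map_eq_neg hΔ hsurj hkn hx hz

end SphereIsometry

theorem antipodes_c0_general {Γ : Type*} [TopologicalSpace Γ] [DiscreteTopology Γ] [DecidableEq Γ]
    {X : Type*} [NormedAddCommGroup X] [NormedSpace ℂ X]
    (Δ : sphere (0 : C₀(Γ, ℂ)) 1 → sphere (0 : X) 1)
    (hΔiso : Isometry Δ) (hΔsurj : Function.Surjective Δ)
    (n : Γ) (μ : ℂ)
    (x y : sphere (0 : C₀(Γ, ℂ)) 1)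
    (hx : (x : C₀(Γ, ℂ)) = μ • stdBasis n)
    (hy : (y : C₀(Γ, ℂ)) = -(μ • stdBasis n)) :
    (Δ y : X) = -(Δ x : X) := by
  obtain ⟨z, hz⟩ := exists_apply_eq_neg_of_surjective hΔsurj x
  have hyz : y = z :=
    Subtype.ext (by rw [hy, eq_neg_smul_stdBasis_of_map_eq_neg hΔiso hΔsurj hx hz])
  rw [hyz, hz]

/-- **Antipodality**: a surjective isometry between the unit spheres of `c₀(Γ)` and a complex
Banach space `X` sends `-μ • eₙ` to the negative of the image of `μ • eₙ`, for `μ` unimodular. -/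
theorem antipodes_c0 {Γ : Type*} [TopologicalSpace Γ] [DiscreteTopology Γ] [DecidableEq Γ]
    [Infinite Γ]
    {X : Type*} [NormedAddCommGroup X] [NormedSpace ℂ X] [CompleteSpace X]
    (Δ : sphere (0 : C₀(Γ, ℂ)) 1 → sphere (0 : X) 1)
    (hΔiso : Isometry Δ) (hΔsurj : Function.Surjective Δ)
    (n : Γ) (μ : ℂ) (hμ : ‖μ‖ = 1)
    (x y : sphere (0 : C₀(Γ, ℂ)) 1)
    (hx : (x : C₀(Γ, ℂ)) = μ • stdBasis n)
    (hy : (y : C₀(Γ, ℂ)) = -(μ • stdBasis n)) :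
    (Δ y : X) = -(Δ x : X) :=
  antipodes_c0_general Δ hΔiso hΔsurj n μ x y hx hy
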